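/- arXiv:2107.12453 — 2 statements merged into one kernel-verified Lean document; each statement's English description precedes it below -/
import Mathlib

section
/- For all n, k ≥ 0, g_{n,k}(1) = (-1)^{n-k} ((1+i)^k + (1-i)^k), where i = √-1; in particular g_{n,k}(1) ≡ 0 (mod 4) for k ≥ 2 with k ≢ 0 mod 4 appropriately, and the stated value is an integer. -/
/-!
If `α + β = x² - 4x + 1` and `αβ = x²`, then `f_n = αⁿ + βⁿ`, and the binomial sum is
`αⁿ(1 + α)ᵏ + βⁿ(1 + β)ᵏ`. Since `(1 + α) + (1 + β) = (x - 1)(x - 3)` and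
`(1 + α)(1 + β) = 2(x - 1)²`, dividing by `(x - 1)ᵏ` gives polynomials `g_{n,k}` obeying
`g_{n,k+2} = (x - 3) g_{n,k+1} - 2 g_{n,k}`. At `x = 1` the roots of `t² + 2t + 2` are `-1 ∓ i`
and `α = β = -1`, which gives the value `(-1)ⁿ((-1 - i)ᵏ + (-1 + i)ᵏ)`.

Every identity used is one between two solutions of the same second-order linear recurrence, so
it reduces to comparing two initial values.
-/

open Polynomial

/-- f 0 = 2, f 1 = X^2 - 4X + 1, f (n+2) = (X^2-4X+1) f (n+1) - X^2 f n. -/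
noncomputable def madanF : ℕ → Polynomial ℤ
  | 0 => 2
  | 1 => X ^ 2 - 4 * X + 1
  | (n + 2) => (X ^ 2 - 4 * X + 1) * madanF (n + 1) - X ^ 2 * madanF n

/-- Σ_{j=0}^{k} C(k,j) f_{n+j}, the numerator of g_{n,k}. -/
noncomputable def gNum (n k : ℕ) : Polynomial ℤ :=
  ∑ j ∈ Finset.range (k + 1), (k.choose j : ℤ) • madanF (n + j)

open Finset

section Recurrence

variable {A : Type*} [CommRing A]

def SatisfiesRec (p q : A) (u : ℕ → A) : Prop :=
  ∀ n, u (n + 2) = p * u (n + 1) - q * u n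

variable {p q : A} {u v : ℕ → A}

theorem SatisfiesRec.ext (hu : SatisfiesRec p q u) (hv : SatisfiesRec p q v)
    (h0 : u 0 = v 0) (h1 : u 1 = v 1) : u = v := by
  have key : ∀ n, u n = v n ∧ u (n + 1) = v (n + 1) := by
    intro n
    induction n with
    | zero => exact ⟨h0, h1⟩
    | succ n ih => exact ⟨ih.2, by rw [hu, hv, ih.1, ih.2]⟩
  funext n
  exact (key n).1

theorem SatisfiesRec.add (hu : SatisfiesRec p q u) (hv : SatisfiesRec p q v) :
    SatisfiesRec p q (fun n => u n + v n) := fun n => by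
  simp only [hu n, hv n]; ring

theorem SatisfiesRec.const_mul (c : A) (hu : SatisfiesRec p q u) :
    SatisfiesRec p q (fun n => c * u n) := fun n => by
  simp only [hu n]; ring

theorem SatisfiesRec.shift (hu : SatisfiesRec p q u) : SatisfiesRec p q (fun n => u (n + 1)) :=
  fun n => hu (n + 1)

theorem SatisfiesRec.map {B F : Type*} [CommRing B] [FunLike F A B] [RingHomClass F A B]
    (φ : F) (hu : SatisfiesRec p q u) :
    SatisfiesRec (φ p) (φ q) (fun n => φ (u n)) := fun n => by
  simp only [hu n, map_sub, map_mul]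

theorem SatisfiesRec.pow_mul (c : A) (hv : SatisfiesRec p q v) :
    SatisfiesRec (c * p) (c ^ 2 * q) (fun k => c ^ k * v k) := fun k => by
  simp only [hv k]; ring

theorem satisfiesRec_pow_add_pow (c α β : A) (hp : α + β = p) (hq : α * β = q) :
    SatisfiesRec p q (fun n => c * (α ^ n + β ^ n)) := fun n => by
  subst hp hq; ring

def binomialSum (u : ℕ → A) (n k : ℕ) : A :=
  ∑ j ∈ range (k + 1), k.choose j • u (n + j)

theorem binomialSum_zero (n : ℕ) : binomialSum u n 0 = u n := by
  simp [binomialSum]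

theorem binomialSum_one (n : ℕ) : binomialSum u n 1 = u n + u (n + 1) := by
  simp [binomialSum, sum_range_succ]

theorem binomialSum_succ (n k : ℕ) :
    binomialSum u n (k + 1) = binomialSum u n k + binomialSum u (n + 1) k := by
  simpa only [binomialSum, add_assoc, add_comm 1] using
    sum_choose_succ_nsmul (fun j _ => u (n + j)) k

theorem SatisfiesRec.binomialSum_left (hu : SatisfiesRec p q u) (k : ℕ) :
    SatisfiesRec p q (fun n => binomialSum u n k) := fun n => by
  simp only [binomialSum, mul_sum, ← sum_sub_distrib]
  refine sum_congr rfl fun j _ => ?_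
  rw [show n + 2 + j = n + j + 2 by ring, hu, smul_sub, mul_smul_comm, mul_smul_comm]
  ring_nf

/-- With `E` the shift, `binomialSum u n k = ((1 + E)ᵏ u) n`, and `E² = p E - q` on `u` gives
`(1 + E)² = (p + 2) (1 + E) - (p + q + 1)`. -/
theorem SatisfiesRec.binomialSum_right (hu : SatisfiesRec p q u) (n : ℕ) :
    SatisfiesRec (p + 2) (p + q + 1) (binomialSum u n) := fun k => by
  have hn : binomialSum u (n + 2) k = p * binomialSum u (n + 1) k - q * binomialSum u n k :=
    hu.binomialSum_left k n
  rw [binomialSum_succ, binomialSum_succ, binomialSum_succ (n + 1)]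
  linear_combination hn

end Recurrence

theorem madanF_satisfiesRec : SatisfiesRec (X ^ 2 - 4 * X + 1) (X ^ 2) madanF := fun _ => rfl

theorem gNum_eq_binomialSum (n k : ℕ) : gNum n k = binomialSum madanF n k := by
  simp only [gNum, binomialSum, natCast_zsmul]

noncomputable def madanH : ℕ → Polynomial ℤ
  | 0 => X - 3
  | 1 => X ^ 3 - 7 * X ^ 2 + 10 * X - 2
  | (n + 2) => (X ^ 2 - 4 * X + 1) * madanH (n + 1) - X ^ 2 * madanH n

theorem madanH_satisfiesRec : SatisfiesRec (X ^ 2 - 4 * X + 1) (X ^ 2) madanH := fun _ => rfl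

theorem X_sub_one_mul_madanH (n : ℕ) : (X - 1) * madanH n = madanF n + madanF (n + 1) := by
  have h := (madanH_satisfiesRec.const_mul (X - 1)).ext
    (madanF_satisfiesRec.add madanF_satisfiesRec.shift) (by simp only [madanH, madanF]; ring)
    (by simp only [madanH, madanF]; ring)
  exact congrFun h n

noncomputable def madanG (n : ℕ) : ℕ → Polynomial ℤ
  | 0 => madanF n
  | 1 => madanH n
  | (k + 2) => (X - 3) * madanG n (k + 1) - 2 * madanG n k

theorem madanG_satisfiesRec (n : ℕ) : SatisfiesRec (X - 3) 2 (madanG n) := fun _ => rfl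

theorem X_sub_one_pow_mul_madanG (n k : ℕ) : (X - 1) ^ k * madanG n k = gNum n k := by
  have hG := (madanG_satisfiesRec n).pow_mul (X - 1)
  have hB := madanF_satisfiesRec.binomialSum_right n
  rw [show (X ^ 2 - 4 * X + 1 : ℤ[X]) + 2 = (X - 1) * (X - 3) by ring,
    show (X ^ 2 - 4 * X + 1 : ℤ[X]) + X ^ 2 + 1 = (X - 1) ^ 2 * 2 by ring] at hB
  rw [gNum_eq_binomialSum]
  exact congrFun (hG.ext hB (by simp [madanG, binomialSum_zero])
    (by simp [madanG, binomialSum_one, X_sub_one_mul_madanH])) k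

theorem SatisfiesRec.aeval_one {u : ℕ → ℤ[X]}
    (hu : SatisfiesRec (X ^ 2 - 4 * X + 1) (X ^ 2) u) :
    SatisfiesRec (-2 : ℂ) 1 (fun n => aeval (1 : ℂ) (u n)) := by
  convert hu.map (aeval (1 : ℂ)) using 1
  · simp [map_ofNat]; norm_num
  · simp

theorem aeval_one_madanF (n : ℕ) : aeval (1 : ℂ) (madanF n) = 2 * (-1) ^ n := by
  have h := madanF_satisfiesRec.aeval_one.ext
    (satisfiesRec_pow_add_pow 1 (-1) (-1) (by norm_num) (by norm_num))
    (by simp [madanF, map_ofNat]; norm_num) (by simp [madanF, map_ofNat]; norm_num)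
  simpa [two_mul] using congrFun h n

theorem aeval_one_madanH (n : ℕ) : aeval (1 : ℂ) (madanH n) = -2 * (-1) ^ n := by
  have h := madanH_satisfiesRec.aeval_one.ext
    (satisfiesRec_pow_add_pow (-1) (-1) (-1) (by norm_num) (by norm_num))
    (by simp [madanH, map_ofNat]; norm_num) (by simp [madanH, map_ofNat]; norm_num)
  simpa [two_mul] using congrFun h n

theorem aeval_one_madanG (n k : ℕ) : aeval (1 : ℂ) (madanG n k) =
    (-1) ^ n * ((-(1 + Complex.I)) ^ k + (-(1 - Complex.I)) ^ k) := by
  have hG : SatisfiesRec (-2 : ℂ) 2 (fun k => aeval (1 : ℂ) (madanG n k)) := by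
    convert (madanG_satisfiesRec n).map (aeval (1 : ℂ)) using 1
    · simp [map_ofNat]; norm_num
    · simp [map_ofNat]
  have h := hG.ext (satisfiesRec_pow_add_pow ((-1) ^ n) (-(1 + Complex.I)) (-(1 - Complex.I))
      (by ring) (by linear_combination -Complex.I_sq))
    (by simp [madanG, aeval_one_madanF]; ring) (by simp [madanG, aeval_one_madanH]; ring)
  exact congrFun h k

theorem stmt_9 : ∀ n k : ℕ, ∀ g : Polynomial ℤ,
    (X - 1) ^ k * g = gNum n k →
    (aeval (1 : ℂ) g : ℂ) =
      (-1 : ℂ) ^ ((n : ℤ) - (k : ℤ)) *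
        ((1 + Complex.I) ^ k + (1 - Complex.I) ^ k) := by
  intro n k g hg
  have hg' : g = madanG n k := mul_left_cancel₀ (pow_ne_zero k (X_sub_C_ne_zero 1))
    (hg.trans (X_sub_one_pow_mul_madanG n k).symm)
  have hsign : (-1 : ℂ) ^ ((n : ℤ) - (k : ℤ)) = (-1) ^ n * (-1) ^ k := by
    rw [zpow_sub₀ (by norm_num), zpow_natCast, zpow_natCast, div_eq_mul_inv, ← inv_pow,
      inv_neg_one]
  rw [hg', aeval_one_madanG, neg_pow (1 + Complex.I), neg_pow (1 - Complex.I), hsign]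
  ring
end

section
/- For all n ≥ 0 and k ≥ 2, g_{n,k}(x) + 4 g_{n,k-1}(x) + 4 g_{n,k-2}(x) - x^2 g_{n-1,k}(x) = 0 (for n ≥ 1). -/
/-!
Write `G n k = ∑ⱼ C(k,j) f_{n+j} = (x-1)^k g_{n,k}`. Pascal's rule gives
`G n (k+1) = G n k + G (n+1) k`, so an identity that is linear in the `G`'s propagates from
`k` to `k + 1`; for `k = 0` it is two applications of the recurrence of `f`. Multiplying the
claimed identity by `(x-1)^(k+2)` turns it into this identity for `G`, and `(x-1)^(k+2)` may be
cancelled again since `ℤ[x]` is a domain.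
-/

open Polynomial

lemma madanF_add_two (n : ℕ) :
    madanF (n + 2) = (X ^ 2 - 4 * X + 1) * madanF (n + 1) - X ^ 2 * madanF n :=
  rfl

lemma gNum_zero (n : ℕ) : gNum n 0 = madanF n := by
  simp [gNum]

lemma gNum_succ (n k : ℕ) : gNum n (k + 1) = gNum n k + gNum (n + 1) k := by
  simpa only [gNum, natCast_zsmul, add_assoc, add_comm 1] using
    Finset.sum_choose_succ_nsmul (fun i _ => madanF (n + i)) k

lemma gNum_recurrence (n k : ℕ) :
    gNum (n + 1) (k + 2) + 4 * (X - 1) * gNum (n + 1) (k + 1) + 4 * (X - 1) ^ 2 * gNum (n + 1) k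
      = X ^ 2 * gNum n (k + 2) := by
  induction k generalizing n with
  | zero =>
    simp only [gNum_succ, gNum_zero, add_assoc, Nat.reduceAdd]
    linear_combination madanF_add_two (n + 1) - madanF_add_two n
  | succ k ih =>
    linear_combination ih n + ih (n + 1) + gNum_succ (n + 1) (k + 2)
      + 4 * (X - 1) * gNum_succ (n + 1) (k + 1) + 4 * (X - 1) ^ 2 * gNum_succ (n + 1) k
      - X ^ 2 * gNum_succ n (k + 2)

theorem stmt_11 : ∀ n k : ℕ, ∀ a b c d : Polynomial ℤ,
    (X - 1) ^ (k + 2) * a = gNum (n + 1) (k + 2) →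
    (X - 1) ^ (k + 1) * b = gNum (n + 1) (k + 1) →
    (X - 1) ^ k * c = gNum (n + 1) k →
    (X - 1) ^ (k + 2) * d = gNum n (k + 2) →
    a + 4 * b + 4 * c - X ^ 2 * d = 0 := by
  intro n k a b c d ha hb hc hd
  have hX : (X - 1 : ℤ[X]) ^ (k + 2) ≠ 0 := pow_ne_zero _ (by simpa using X_sub_C_ne_zero (1 : ℤ))
  refine mul_left_cancel₀ hX ?_
  linear_combination ha + 4 * (X - 1) * hb + 4 * (X - 1) ^ 2 * hc - X ^ 2 * hd
    + gNum_recurrence n k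
end
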